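/- For all g, h ∈ SL₂(ℝ) and z ∈ ℍ, Log j(g, h·z) + Log j(h, z) − Log j(gh, z) ∈ {−2πi, 0, 2πi}. -/
import Mathlib


open Complex

/-- The automorphy factor `j(g,z) = cz + d` for `g = (a b; c d) ∈ SL₂(ℝ)`. -/
noncomputable def jf (g : Matrix.SpecialLinearGroup (Fin 2) ℝ) (z : ℂ) : ℂ :=
  (g.1 1 0 : ℝ) * z + (g.1 1 1 : ℝ)

/-- The Möbius action `g·z = (az+b)/(cz+d)`. -/
noncomputable def act (g : Matrix.SpecialLinearGroup (Fin 2) ℝ) (z : ℂ) : ℂ :=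
  ((g.1 0 0 : ℝ) * z + (g.1 0 1 : ℝ)) / jf g z

/-- `ω(g,h) = (1/(2πi))(Log j(g,h·z) + Log j(h,z) − Log j(gh,z))`. -/
noncomputable def om (g h : Matrix.SpecialLinearGroup (Fin 2) ℝ) (z : ℂ) : ℂ :=
  (1 / (2 * Real.pi * I)) *
    (Complex.log (jf g (act h z)) + Complex.log (jf h z) - Complex.log (jf (g * h) z))

lemma jf_ne (h : Matrix.SpecialLinearGroup (Fin 2) ℝ) (z : ℂ) (hz : 0 < z.im) :
    jf h z ≠ 0 := by
  intro h0
  have hdet := h.2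
  rw [Matrix.det_fin_two] at hdet
  have him := congrArg Complex.im h0
  have hre := congrArg Complex.re h0
  simp [jf, Complex.add_im, Complex.mul_im, Complex.add_re, Complex.mul_re] at him hre
  have hc : h.1 1 0 = 0 := by
    rcases him with h' | h'
    · exact h'
    · exact absurd h' hz.ne'
  rw [hc] at hre
  simp at hre
  rw [hc, hre] at hdet
  simp at hdet

lemma jf_cocycle (g h : Matrix.SpecialLinearGroup (Fin 2) ℝ) (z : ℂ) (hz : 0 < z.im) :
    jf g (act h z) * jf h z = jf (g * h) z := by
  have hne := jf_ne h z hz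
  simp only [jf] at hne
  simp only [jf, act, Matrix.SpecialLinearGroup.coe_mul, Matrix.mul_apply,
    Fin.sum_univ_two]
  rw [add_mul, mul_assoc, div_mul_cancel₀ _ hne]
  push_cast
  ring

lemma log_add_log_sub_log_mul (a b : ℂ) (ha : a ≠ 0) (hb : b ≠ 0) :
    Complex.log a + Complex.log b - Complex.log (a * b)
      ∈ ({-(2 * Real.pi * I), 0, 2 * Real.pi * I} : Set ℂ) := by
  set d := Complex.log a + Complex.log b - Complex.log (a * b) with hd
  have hexp : Complex.exp d = 1 := by
    rw [hd, Complex.exp_sub, Complex.exp_add, Complex.exp_log ha, Complex.exp_log hb,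
      Complex.exp_log (mul_ne_zero ha hb), div_self (mul_ne_zero ha hb)]
  obtain ⟨n, hn⟩ := Complex.exp_eq_one_iff.mp hexp
  have hdim : d.im = a.arg + b.arg - (a * b).arg := by
    simp [hd, Complex.log_im]
  have himb : |d.im| < 3 * Real.pi := by
    rw [hdim]
    have h1 := Complex.neg_pi_lt_arg a
    have h1' := Complex.arg_le_pi a
    have h2 := Complex.neg_pi_lt_arg b
    have h2' := Complex.arg_le_pi b
    have h3 := Complex.neg_pi_lt_arg (a * b)
    have h3' := Complex.arg_le_pi (a * b)
    rw [abs_lt]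
    constructor <;> linarith
  have hnim : d.im = n * (2 * Real.pi) := by
    rw [hn]
    simp [Complex.mul_im]
  have hn1 : |(n : ℝ)| < 3 / 2 := by
    have hpi := Real.pi_pos
    rw [hnim, abs_mul, abs_of_pos (by positivity : (0:ℝ) < 2 * Real.pi)] at himb
    nlinarith
  have hn' : n = -1 ∨ n = 0 ∨ n = 1 := by
    have h2 : |n| ≤ 1 := by
      by_contra hc
      push_neg at hc
      have h2' : (2 : ℤ) ≤ |n| := hc
      have : (2 : ℝ) ≤ |(n : ℝ)| := by
        rw [← Int.cast_abs]; exact_mod_cast h2'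
      linarith
    obtain ⟨l, r⟩ := abs_le.mp h2
    omega
  simp only [Set.mem_insert_iff, Set.mem_singleton_iff]
  rcases hn' with rfl | rfl | rfl
  · left; rw [hn]; push_cast; ring
  · right; left; rw [hn]; simp
  · right; right; rw [hn]; push_cast; ring

theorem log_j_cocycle_values (g h : Matrix.SpecialLinearGroup (Fin 2) ℝ)
    (z : ℂ) (hz : 0 < z.im) :
    Complex.log (jf g (act h z)) + Complex.log (jf h z) - Complex.log (jf (g * h) z)
      ∈ ({-(2 * Real.pi * I), 0, 2 * Real.pi * I} : Set ℂ) := by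
  have hco := jf_cocycle g h z hz
  have hb := jf_ne h z hz
  have hgh := jf_ne (g * h) z hz
  have ha : jf g (act h z) ≠ 0 := by
    intro h0
    rw [h0, zero_mul] at hco
    exact hgh hco.symm
  rw [← hco]
  exact log_add_log_sub_log_mul _ _ ha hb
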